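/- arXiv:0709.1116 — 7 statements merged into one kernel-verified Lean document; each statement's English description precedes it below -/
import Mathlib

section
/- If k is odd, b ≠ 0, d ≠ 0, and (bc - (1-e)((a-1)^2+b^2))/(bd) > 0, then F has exactly two fixed points other than the origin, namely ±p1, where p1 = (x1, ((a^2+b^2-a)/b)·x1, (((a-1)^2+b^2)/b)·x1) and x1 is the positive (k-1)-th root of (bc - (1-e)((a-1)^2+b^2))/(bd). -/
/-!
The first two coordinates of the fixed-point equation force `y` and `z` to be fixed multiples
of `x`; substituting into the third leaves the scalar equation `x ^ k = x1 ^ (k - 1) * x`.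
Since `k - 1` is even and positive, its solutions are `x = 0`, which gives the origin, and
`x = ±x1`.
-/

/-- The ACT map. -/
def ACT (a b c d e : ℝ) (k : ℕ) : ℝ × ℝ × ℝ → ℝ × ℝ × ℝ :=
  fun p => (a * p.1 - b * (p.2.1 - p.2.2), b * p.1 + a * (p.2.1 - p.2.2),
    c * p.1 - d * p.1 ^ k + e * p.2.2)

theorem pow_eq_pow_pred_mul_iff_of_odd {R : Type*} [Ring R] [LinearOrder R]
    [IsStrictOrderedRing R] {k : ℕ} (hk : 1 < k) (hkodd : Odd k) (x r : R) :
    x ^ k = r ^ (k - 1) * x ↔ x = 0 ∨ x = r ∨ x = -r := by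
  have hxk : x ^ k = x ^ (k - 1) * x := by rw [← pow_succ, Nat.sub_add_cancel hk.le]
  have heven : Even (k - 1) := Nat.Odd.sub_odd hkodd odd_one
  rcases eq_or_ne x 0 with rfl | hx
  · simp [zero_pow (by omega : k ≠ 0)]
  · rw [hxk, mul_left_inj' hx, pow_eq_pow_iff_of_ne_zero (by omega)]
    simp [hx, heven]

theorem ACT_apply_eq_self_iff {a b c d e : ℝ} {k : ℕ} (hb : b ≠ 0) (hd : d ≠ 0)
    (x y z : ℝ) :
    ACT a b c d e k (x, y, z) = (x, y, z) ↔
      y = (a ^ 2 + b ^ 2 - a) / b * x ∧ z = ((a - 1) ^ 2 + b ^ 2) / b * x ∧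
        x ^ k = (b * c - (1 - e) * ((a - 1) ^ 2 + b ^ 2)) / (b * d) * x := by
  simp only [ACT, Prod.mk.injEq]
  constructor
  · rintro ⟨h1, h2, h3⟩
    have hy : y = (a ^ 2 + b ^ 2 - a) / b * x := by
      field_simp
      linear_combination (-a) * h1 + (-b) * h2
    have hz : z = ((a - 1) ^ 2 + b ^ 2) / b * x := by
      field_simp
      linear_combination (-(a - 1)) * h1 + (-b) * h2
    refine ⟨hy, hz, ?_⟩
    rw [hz] at h3
    field_simp at h3 ⊢
    linear_combination -h3
  · rintro ⟨rfl, rfl, h3⟩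
    field_simp at h3 ⊢
    exact ⟨by ring, by ring, by linear_combination -h3⟩

theorem ACT_two_nontrivial_fixed_points_odd_general (a b c d e : ℝ) (k : ℕ) (hk : 1 < k)
    (hkodd : Odd k) (hb : b ≠ 0) (hd : d ≠ 0) (x1 : ℝ)
    (hx1pos : 0 < x1)
    (hx1 : x1 ^ (k - 1) = (b * c - (1 - e) * ((a - 1) ^ 2 + b ^ 2)) / (b * d)) :
    letI p1 : ℝ × ℝ × ℝ :=
      (x1, ((a ^ 2 + b ^ 2 - a) / b) * x1, (((a - 1) ^ 2 + b ^ 2) / b) * x1)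
    {p : ℝ × ℝ × ℝ | ACT a b c d e k p = p ∧ p ≠ (0, 0, 0)} = {p1, -p1} ∧ p1 ≠ -p1 := by
  have hx1ne : x1 ≠ 0 := hx1pos.ne'
  refine ⟨?_, fun h => hx1ne (self_eq_neg.mp (congrArg Prod.fst h))⟩
  ext ⟨x, y, z⟩
  simp only [Set.mem_ofPred_eq, ACT_apply_eq_self_iff hb hd, ← hx1,
    pow_eq_pow_pred_mul_iff_of_odd hk hkodd, Set.mem_insert_iff, Set.mem_singleton_iff,
    Prod.mk.injEq, Prod.neg_mk, ne_eq]
  constructor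
  · rintro ⟨⟨rfl, rfl, rfl | rfl | rfl⟩, hne⟩
    · simp at hne
    · exact Or.inl ⟨rfl, rfl, rfl⟩
    · exact Or.inr ⟨rfl, by ring, by ring⟩
  · rintro (⟨rfl, rfl, rfl⟩ | ⟨rfl, rfl, rfl⟩)
    · simp [hx1ne]
    · exact ⟨⟨by ring, by ring, by simp⟩, by simp [hx1ne]⟩

/-- For odd `k` and a positive parameter combination, the ACT map has exactly two
nontrivial fixed points `±p₁`. -/
theorem ACT_two_nontrivial_fixed_points_odd (a b c d e : ℝ) (k : ℕ) (hk : 1 < k)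
    (hkodd : Odd k) (hb : b ≠ 0) (hd : d ≠ 0)
    (hpos : (b * c - (1 - e) * ((a - 1) ^ 2 + b ^ 2)) / (b * d) > 0) (x1 : ℝ)
    (hx1pos : 0 < x1)
    (hx1 : x1 ^ (k - 1) = (b * c - (1 - e) * ((a - 1) ^ 2 + b ^ 2)) / (b * d)) :
    letI p1 : ℝ × ℝ × ℝ :=
      (x1, ((a ^ 2 + b ^ 2 - a) / b) * x1, (((a - 1) ^ 2 + b ^ 2) / b) * x1)
    {p : ℝ × ℝ × ℝ | ACT a b c d e k p = p ∧ p ≠ (0, 0, 0)} = {p1, -p1} ∧ p1 ≠ -p1 :=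
  ACT_two_nontrivial_fixed_points_odd_general a b c d e k hk hkodd hb hd x1 hx1pos hx1
end

section
/- If k is odd and b ≠ 0 and d ≠ 0, then F has a pair of points ±p satisfying F(p) = -p and F(-p) = p (symmetric period-2 points) if and only if (bc - (1+e)((a+1)^2+b^2))/(bd) > 0; in that case p = p2 = (x2, ((-a^2-b^2-a)/b)·x2, ((-(a+1)^2-b^2)/b)·x2), where x2 is the positive (k-1)-th root of (bc - (1+e)((a+1)^2+b^2))/(bd). -/
lemma ACT_neg_iff (a b c d e : ℝ) (k : ℕ) (hb : b ≠ 0) (hd : d ≠ 0) (x y z : ℝ) :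
    ACT a b c d e k (x, y, z) = -(x, y, z) ↔
      y = ((-a ^ 2 - b ^ 2 - a) / b) * x ∧ z = ((-(a + 1) ^ 2 - b ^ 2) / b) * x ∧
        x ^ k = ((b * c - (1 + e) * ((a + 1) ^ 2 + b ^ 2)) / (b * d)) * x := by
  have hbd : b * d ≠ 0 := mul_ne_zero hb hd
  simp only [ACT, Prod.mk.injEq, Prod.neg_mk]
  constructor
  · rintro ⟨h1, h2, h3⟩
    have hy : y = ((-a ^ 2 - b ^ 2 - a) / b) * x := by
      field_simp
      linear_combination b * h2 + a * h1
    have hz' : b * z = (-(a + 1) ^ 2 - b ^ 2) * x := by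
      have hy' : b * y = (-a ^ 2 - b ^ 2 - a) * x := by
        rw [hy]; field_simp
      linear_combination h1 + hy'
    have hz : z = ((-(a + 1) ^ 2 - b ^ 2) / b) * x := by
      rw [div_mul_eq_mul_div, eq_div_iff hb]; linear_combination hz'
    refine ⟨hy, hz, ?_⟩
    rw [div_mul_eq_mul_div, eq_div_iff hbd]
    linear_combination (-b) * h3 + (1 + e) * hz'
  · rintro ⟨hy, hz, hx⟩
    subst hy hz
    have hx' : x ^ k * (b * d) =
        (b * c - (1 + e) * ((a + 1) ^ 2 + b ^ 2)) * x := by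
      rw [div_mul_eq_mul_div] at hx
      rw [hx]; field_simp
    refine ⟨by field_simp; ring, by field_simp; ring, ?_⟩
    field_simp
    linear_combination (-1 : ℝ) * hx'

/-- For odd `k`, the ACT map has symmetric period-2 points iff
`(bc - (1+e)((a+1)² + b²))/(bd) > 0`, and in that case the pair of such points is
exactly `±p₂`. -/
theorem ACT_symmetric_period_two (a b c d e : ℝ) (k : ℕ) (hk : 1 < k)
    (hkodd : Odd k) (hb : b ≠ 0) (hd : d ≠ 0) :
    ((∃ p : ℝ × ℝ × ℝ, p ≠ 0 ∧ ACT a b c d e k p = -p) ↔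
      (b * c - (1 + e) * ((a + 1) ^ 2 + b ^ 2)) / (b * d) > 0) ∧
    (∀ x2 : ℝ, 0 < x2 →
      x2 ^ (k - 1) = (b * c - (1 + e) * ((a + 1) ^ 2 + b ^ 2)) / (b * d) →
      letI p2 : ℝ × ℝ × ℝ :=
        (x2, ((-a ^ 2 - b ^ 2 - a) / b) * x2, ((-(a + 1) ^ 2 - b ^ 2) / b) * x2)
      {p : ℝ × ℝ × ℝ | p ≠ 0 ∧ ACT a b c d e k p = -p} = {p2, -p2}) := by
  set Q : ℝ := (b * c - (1 + e) * ((a + 1) ^ 2 + b ^ 2)) / (b * d) with hQ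
  have hke : Even (k - 1) := by
    obtain ⟨m, rfl⟩ := hkodd
    simp [Nat.even_sub (by omega : 1 ≤ 2*m+1)]
  have hk1 : k - 1 + 1 = k := by omega
  have hk10 : k - 1 ≠ 0 := by omega
  have hkodd' : Odd k := by rw [← hk1]; exact hke.add_one
  constructor
  · constructor
    · rintro ⟨⟨x, y, z⟩, hp0, hp⟩
      rw [ACT_neg_iff a b c d e k hb hd] at hp
      obtain ⟨hy, hz, hx⟩ := hp
      have hx0 : x ≠ 0 := by
        rintro rfl
        exact hp0 (by simp [hy, hz])
      have hQeq : x ^ (k - 1) = Q := by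
        have hxx : x ^ (k - 1) * x = Q * x := by
          rw [← pow_succ, hk1]; exact hx
        exact mul_right_cancel₀ hx0 hxx
      rw [← hQeq]
      exact hke.pow_pos hx0
    · intro hQpos
      refine ⟨(Q ^ ((k - 1 : ℕ) : ℝ)⁻¹, ((-a ^ 2 - b ^ 2 - a) / b) * Q ^ ((k - 1 : ℕ) : ℝ)⁻¹,
        ((-(a + 1) ^ 2 - b ^ 2) / b) * Q ^ ((k - 1 : ℕ) : ℝ)⁻¹), ?_, ?_⟩
      · have hpos : (0:ℝ) < Q ^ ((k - 1 : ℕ) : ℝ)⁻¹ := Real.rpow_pos_of_pos hQpos _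
        simp only [ne_eq, Prod.mk.injEq, Prod.mk_eq_zero]
        intro h
        exact hpos.ne' h.1
      · rw [ACT_neg_iff a b c d e k hb hd]
        refine ⟨rfl, rfl, ?_⟩
        have hroot : (Q ^ ((k - 1 : ℕ) : ℝ)⁻¹) ^ (k - 1) = Q :=
          Real.rpow_inv_natCast_pow hQpos.le hk10
        calc (Q ^ ((k - 1 : ℕ) : ℝ)⁻¹) ^ k
            = (Q ^ ((k - 1 : ℕ) : ℝ)⁻¹) ^ (k - 1) * Q ^ ((k - 1 : ℕ) : ℝ)⁻¹ := by
              rw [← pow_succ, hk1]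
          _ = Q * Q ^ ((k - 1 : ℕ) : ℝ)⁻¹ := by rw [hroot]
  · intro x2 hx2 hx2Q
    ext ⟨x, y, z⟩
    constructor
    · rintro ⟨hp0, hp⟩
      rw [ACT_neg_iff a b c d e k hb hd] at hp
      obtain ⟨hy, hz, hx⟩ := hp
      have hx0 : x ≠ 0 := by
        rintro rfl
        exact hp0 (by simp [hy, hz])
      have hpow : x ^ (k - 1) = x2 ^ (k - 1) := by
        rw [hx2Q]
        have hxx : x ^ (k - 1) * x = Q * x := by rw [← pow_succ, hk1]; exact hx
        exact mul_right_cancel₀ hx0 hxx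
      have habs : |x| = x2 := by
        have h1 : |x| ^ (k - 1) = x2 ^ (k - 1) := by
          rw [hke.pow_abs]; exact hpow
        exact (pow_left_inj₀ (abs_nonneg x) hx2.le hk10).mp h1
      rcases (abs_eq hx2.le).mp habs with rfl | rfl
      · exact Set.mem_insert_iff.mpr (Or.inl (by rw [hy, hz]))
      · refine Set.mem_insert_iff.mpr (Or.inr ?_)
        simp only [Set.mem_singleton_iff, Prod.neg_mk]
        exact Prod.ext_iff.mpr ⟨rfl, Prod.ext_iff.mpr ⟨by rw [hy]; ring, by rw [hz]; ring⟩⟩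
    · intro h
      simp only [Set.mem_insert_iff, Set.mem_singleton_iff, Prod.neg_mk, Prod.mk.injEq] at h
      have hQpos : 0 < Q := by rw [← hx2Q]; positivity
      rcases h with ⟨rfl, rfl, rfl⟩ | ⟨rfl, rfl, rfl⟩
      · refine ⟨?_, ?_⟩
        · simp only [ne_eq, Prod.mk_eq_zero, not_and]
          intro h'; exact absurd h' hx2.ne'
        · rw [ACT_neg_iff a b c d e k hb hd]
          exact ⟨rfl, rfl, by rw [← hk1, pow_succ, hx2Q]⟩
      · refine ⟨?_, ?_⟩
        · simp only [ne_eq, Prod.mk_eq_zero, not_and]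
          intro h'; exact absurd (neg_eq_zero.mp h') hx2.ne'
        · rw [ACT_neg_iff a b c d e k hb hd]
          refine ⟨by ring, by ring, ?_⟩
          have hnp : (-x2) ^ k = -(x2 ^ k) := hkodd'.neg_pow x2
          rw [hnp, ← hk1, pow_succ, hx2Q]; ring
end

section
/- A cubic polynomial P(λ) = λ^3 + Aλ^2 + Bλ + D with real coefficients has all its (complex) roots strictly inside the unit circle if and only if |D| < 1, P(1) > 0, P(-1) < 0, and -D^2 + AD - B + 1 > 0. -/
/-!
A real cubic has a real root `c`, so `P(λ) = (λ - c) Q(λ)` with `Q(λ) = λ² + pλ + q`, `p, q` real.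
The four conditions then read `|cq| < 1`, `(1 - c) Q(1) > 0`, `(1 + c) Q(-1) > 0` and
`(1 - q)(1 + cp + c²q) > 0`, and elementary inequalities show that they hold exactly when
`|c| < 1` and `Q(1) > 0`, `Q(-1) > 0`, `q < 1`. The latter three conditions characterise the
stability of `Q`: its roots are either two reals `a, b`, where `Q(±1) = (1 ∓ a)(1 ∓ b)` and
`q = ab`, or a conjugate pair `x ± iy`, where `q = x² + y²`.
-/

theorem abs_quadratic_le_of_one_le_abs (A B D : ℝ) {x : ℝ} (hx : 1 ≤ |x|) :
    |A * x ^ 2 + B * x + D| ≤ (|A| + |B| + |D|) * x ^ 2 := by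
  have hx2 : |x| ≤ x ^ 2 := by rw [← sq_abs]; nlinarith
  calc |A * x ^ 2 + B * x + D| ≤ |A| * x ^ 2 + |B| * |x| + |D| := by
        grw [abs_add_le, abs_add_le, abs_mul, abs_mul, abs_sq]
    _ ≤ (|A| + |B| + |D|) * x ^ 2 := by
        nlinarith [mul_le_mul_of_nonneg_left hx2 (abs_nonneg B), abs_nonneg D]

/-- `λ³ + Aλ² + Bλ + D = (λ - c)(λ² + pλ + q)`. -/
theorem cubic_exists_linear_mul_quadratic (A B D : ℝ) :
    ∃ c p q : ℝ, A = p - c ∧ B = q - c * p ∧ D = -(c * q) := by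
  set M := 1 + |A| + |B| + |D|
  have hM : 1 ≤ M := by linarith [abs_nonneg A, abs_nonneg B, abs_nonneg D]
  have hpos := abs_le.mp <| abs_quadratic_le_of_one_le_abs A B D (x := M) <| by
    rwa [abs_of_nonneg (by linarith)]
  have hneg := abs_le.mp <| abs_quadratic_le_of_one_le_abs A B D (x := -M) <| by
    rwa [abs_neg, abs_of_nonneg (by linarith)]
  obtain ⟨c, -, hc⟩ : ∃ c ∈ Set.Icc (-M) M, c ^ 3 + A * c ^ 2 + B * c + D = 0 := by
    apply intermediate_value_Icc (by linarith) (by fun_prop)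
    constructor <;> nlinarith
  exact ⟨c, A + c, B + A * c + c ^ 2, by ring, by ring, by linear_combination hc⟩

theorem exists_real_roots_or_conj_roots (p q : ℝ) :
    (∃ a b : ℝ, p = -(a + b) ∧ q = a * b) ∨ ∃ x y : ℝ, p = -(2 * x) ∧ q = x ^ 2 + y ^ 2 := by
  rcases le_total 0 (p ^ 2 - 4 * q) with h | h
  · refine .inl ⟨(-p + √(p ^ 2 - 4 * q)) / 2, (-p - √(p ^ 2 - 4 * q)) / 2, by ring, ?_⟩
    linear_combination (1 / 4 : ℝ) * Real.sq_sqrt h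
  · refine .inr ⟨-p / 2, √(4 * q - p ^ 2) / 2, by ring, ?_⟩
    linear_combination (-1 / 4 : ℝ) * Real.sq_sqrt (by linarith : 0 ≤ 4 * q - p ^ 2)

theorem forall_norm_lt_one_of_sub_mul_eq_zero_iff (c : ℂ) (f : ℂ → ℂ) :
    (∀ z : ℂ, (z - c) * f z = 0 → ‖z‖ < 1) ↔ ‖c‖ < 1 ∧ ∀ z, f z = 0 → ‖z‖ < 1 := by
  simp only [mul_eq_zero, sub_eq_zero, or_imp, forall_and, forall_eq]

theorem forall_norm_lt_one_of_sub_mul_sub_eq_zero_iff (r s : ℂ) :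
    (∀ z : ℂ, (z - r) * (z - s) = 0 → ‖z‖ < 1) ↔ ‖r‖ < 1 ∧ ‖s‖ < 1 := by
  simp only [forall_norm_lt_one_of_sub_mul_eq_zero_iff, sub_eq_zero, forall_eq]

theorem abs_lt_one_and_abs_lt_one_iff (a b : ℝ) :
    |a| < 1 ∧ |b| < 1 ↔ 0 < (1 - a) * (1 - b) ∧ 0 < (1 + a) * (1 + b) ∧ a * b < 1 := by
  simp only [abs_lt]
  constructor
  · rintro ⟨⟨ha, ha'⟩, hb, hb'⟩
    exact ⟨by nlinarith, by nlinarith, by nlinarith⟩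
  · rintro ⟨h1, h2, h3⟩
    refine ⟨⟨?_, ?_⟩, ?_, ?_⟩ <;> nlinarith

theorem quadratic_roots_norm_lt_one_iff (p q : ℝ) :
    (∀ z : ℂ, z ^ 2 + p * z + q = 0 → ‖z‖ < 1) ↔ 0 < 1 + p + q ∧ 0 < 1 - p + q ∧ q < 1 := by
  rcases exists_real_roots_or_conj_roots p q with ⟨a, b, rfl, rfl⟩ | ⟨x, y, rfl, rfl⟩
  · have hfactor (z : ℂ) :
        z ^ 2 + ((-(a + b) : ℝ) : ℂ) * z + ((a * b : ℝ) : ℂ) = (z - a) * (z - b) := by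
      push_cast; ring
    simp only [hfactor, forall_norm_lt_one_of_sub_mul_sub_eq_zero_iff, Complex.norm_real,
      Real.norm_eq_abs, abs_lt_one_and_abs_lt_one_iff]
    constructor <;> rintro ⟨h1, h2, h3⟩ <;> exact ⟨by linarith, by linarith, h3⟩
  · set w : ℂ := ⟨x, y⟩
    have hfactor (z : ℂ) : z ^ 2 + ((-(2 * x) : ℝ) : ℂ) * z + ((x ^ 2 + y ^ 2 : ℝ) : ℂ) =
        (z - w) * (z - starRingEnd ℂ w) := by
      rw [show (z - w) * (z - starRingEnd ℂ w) =
          z ^ 2 - (w + starRingEnd ℂ w) * z + w * starRingEnd ℂ w by ring,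
        Complex.add_conj, Complex.mul_conj, Complex.normSq_mk]
      push_cast; ring
    have hw : ‖w‖ < 1 ↔ x ^ 2 + y ^ 2 < 1 := by
      rw [← sq_lt_one_iff₀ (norm_nonneg w), Complex.sq_norm, Complex.normSq_mk, ← sq, ← sq]
    simp only [hfactor, forall_norm_lt_one_of_sub_mul_sub_eq_zero_iff, Complex.norm_conj,
      and_self, hw]
    exact ⟨fun h => ⟨by nlinarith [sq_nonneg y], by nlinarith [sq_nonneg y], h⟩, fun h => h.2.2⟩

theorem abs_lt_one_of_factored_jury {c p q : ℝ} (hD : |c * q| < 1)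
    (h1 : 0 < (1 - c) * (1 + p + q)) (h2 : 0 < (1 + c) * (1 - p + q))
    (h3 : 0 < (1 - q) * (1 + c * p + c ^ 2 * q)) : |c| < 1 := by
  have hcq := abs_lt.mp hD
  rw [abs_mul] at hD
  by_contra! hc
  have hq : |q| < 1 := by nlinarith [abs_nonneg q]
  have hR := pos_of_mul_pos_right h3 (by linarith [le_abs_self q])
  -- `c > 1` forces `Q(1) < 0`, whence `1 + cp + c²q < (1 - c)(1 - cq) < 0`; dually for `c < -1`.
  rcases le_or_gt 0 c with hc0 | hc0
  · rw [abs_of_nonneg hc0] at hc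
    have hQ : 1 + p + q < 0 := by nlinarith
    nlinarith [mul_neg_of_pos_of_neg (by linarith : 0 < c) hQ,
      mul_nonpos_of_nonpos_of_nonneg (by linarith : 1 - c ≤ 0) (by linarith : 0 ≤ 1 - c * q)]
  · rw [abs_of_neg hc0] at hc
    have hQ : 1 - p + q < 0 := by nlinarith
    nlinarith [mul_pos_of_neg_of_neg hc0 hQ,
      mul_nonpos_of_nonpos_of_nonneg (by linarith : 1 + c ≤ 0) (by linarith : 0 ≤ 1 + c * q)]

theorem factored_jury_iff (c p q : ℝ) :
    (|c * q| < 1 ∧ 0 < (1 - c) * (1 + p + q) ∧ 0 < (1 + c) * (1 - p + q) ∧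
        0 < (1 - q) * (1 + c * p + c ^ 2 * q)) ↔
      |c| < 1 ∧ 0 < 1 + p + q ∧ 0 < 1 - p + q ∧ q < 1 := by
  constructor
  · rintro ⟨hD, h1, h2, h3⟩
    have hc := abs_lt_one_of_factored_jury hD h1 h2 h3
    obtain ⟨hc1, hc2⟩ := abs_lt.mp hc
    have hQ1 : 0 < 1 + p + q := pos_of_mul_pos_right h1 (by linarith)
    have hQ2 : 0 < 1 - p + q := pos_of_mul_pos_right h2 (by linarith)
    refine ⟨hc, hQ1, hQ2, ?_⟩
    by_contra! hq
    -- `|p| < 1 + q` gives `1 + cp + c²q > (1 - |c|)(1 - |c| q) > 0`.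
    have hR : 0 < 1 + c * p + c ^ 2 * q := by
      rcases le_or_gt 0 c with hc0 | hc0 <;> nlinarith [abs_lt.mp hD]
    nlinarith
  · rintro ⟨hc, hQ1, hQ2, hq⟩
    obtain ⟨hc1, hc2⟩ := abs_lt.mp hc
    have hq' : |q| < 1 := abs_lt.mpr ⟨by linarith, hq⟩
    refine ⟨?_, by nlinarith, by nlinarith, mul_pos (by linarith) ?_⟩
    · rw [abs_mul]
      exact mul_lt_one_of_nonneg_of_lt_one_left (abs_nonneg c) hc hq'.le
    · have hc_sq : 0 < 1 - c ^ 2 := by nlinarith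
      calc (0 : ℝ) < (1 + c) ^ 2 / 4 * (1 + p + q) + (1 - c) ^ 2 / 4 * (1 - p + q) +
            (1 - c ^ 2) / 2 * (1 - q) := by have := sub_pos.mpr hq; positivity
        _ = 1 + c * p + c ^ 2 * q := by ring

theorem cubic_jury_iff {A B D c p q : ℝ} (hA : A = p - c) (hB : B = q - c * p)
    (hD : D = -(c * q)) :
    (|D| < 1 ∧ 0 < 1 + A + B + D ∧ (-1 : ℝ) + A - B + D < 0 ∧ 0 < -D ^ 2 + A * D - B + 1) ↔
      |c| < 1 ∧ 0 < 1 + p + q ∧ 0 < 1 - p + q ∧ q < 1 := by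
  subst hA hB hD
  have hP1 : 1 + (p - c) + (q - c * p) + -(c * q) = (1 - c) * (1 + p + q) := by ring
  have hPm1 : (-1 : ℝ) + (p - c) - (q - c * p) + -(c * q) = -((1 + c) * (1 - p + q)) := by ring
  have hR : -(-(c * q)) ^ 2 + (p - c) * -(c * q) - (q - c * p) + 1 =
      (1 - q) * (1 + c * p + c ^ 2 * q) := by ring
  rw [abs_neg, hP1, hPm1, hR, neg_lt_zero, factored_jury_iff]

/-- Stability criterion for a real cubic `λ³ + Aλ² + Bλ + D`: all complex roots lie
strictly inside the unit circle iff `|D| < 1`, `P(1) > 0`, `P(-1) < 0` and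
`-D² + AD - B + 1 > 0`. -/
theorem cubic_stability_criterion (A B D : ℝ) :
    (∀ z : ℂ, z ^ 3 + (A : ℂ) * z ^ 2 + (B : ℂ) * z + (D : ℂ) = 0 → ‖z‖ < 1) ↔
      (|D| < 1 ∧ 0 < 1 + A + B + D ∧ (-1 : ℝ) + A - B + D < 0 ∧
        0 < -D ^ 2 + A * D - B + 1) := by
  obtain ⟨c, p, q, hA, hB, hD⟩ := cubic_exists_linear_mul_quadratic A B D
  have hfactor (z : ℂ) : z ^ 3 + (A : ℂ) * z ^ 2 + (B : ℂ) * z + (D : ℂ) =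
      (z - c) * (z ^ 2 + p * z + q) := by
    rw [hA, hB, hD]; push_cast; ring
  simp only [hfactor, forall_norm_lt_one_of_sub_mul_eq_zero_iff, quadratic_roots_norm_lt_one_iff,
    Complex.norm_real, Real.norm_eq_abs]
  exact (cubic_jury_iff hA hB hD).symm
end

section
/- For the family P_β(λ) = λ^3 + Aλ^2 + (B+β)λ + D of real cubic polynomials, there exists β ∈ R such that all complex roots of P_β lie strictly inside the unit circle if and only if |D| < 1 and |A - D| < 2. -/
/-!
A stable real cubic has a real root `x`, necessarily in `(-1, 1)`, and dividing it out leaves a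
stable real quadratic `z² + p z + q`; by the Schur–Cohn criterion for quadratics this means
`|q| < 1` and `|p| < 1 + q`. Then `D = -x q` and `A - D = p - x (1 - q)`, so `|D| < 1` and
`|A - D| < (1 + q) + (1 - q) = 2`. Conversely, `β` only moves the linear coefficient, so it can be
chosen to make the cubic equal to `(z - x)(z² + p z + q)` with `q` slightly below `1`,
`x = -D / q` and `p = A - D / q`; as `q → 1` these constraints tend to `|D| < 1` and `|A - D| < 2`.
-/

open Complex ComplexConjugate Filter Topology

def IsSchurStable (f : ℂ → ℂ) : Prop := ∀ z, f z = 0 → ‖z‖ < 1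

lemma isSchurStable_sub_mul_iff (x : ℂ) (f : ℂ → ℂ) :
    IsSchurStable (fun z => (z - x) * f z) ↔ ‖x‖ < 1 ∧ IsSchurStable f := by
  simp only [IsSchurStable, mul_eq_zero, sub_eq_zero]
  constructor
  · intro h
    exact ⟨h x (Or.inl rfl), fun z hz => h z (Or.inr hz)⟩
  · rintro ⟨hx, hf⟩ z (rfl | hz)
    exacts [hx, hf z hz]

lemma abs_lt_one_of_quadratic_eq_zero {p q x : ℝ} (hq : |q| < 1) (hp : |p| < 1 + q)
    (hx : x ^ 2 + p * x + q = 0) : |x| < 1 := by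
  obtain ⟨hq1, hq2⟩ := abs_lt.mp hq
  obtain ⟨hp1, hp2⟩ := abs_lt.mp hp
  rw [abs_lt]
  constructor
  · by_contra! h
    have : 0 ≤ (x + 1) * (x - 1 + p) := mul_nonneg_of_nonpos_of_nonpos (by linarith) (by linarith)
    linarith [show x ^ 2 + p * x + q = (x + 1) * (x - 1 + p) + (1 - p + q) by ring]
  · by_contra! h
    have : 0 ≤ (x - 1) * (x + 1 + p) := mul_nonneg (by linarith) (by linarith)
    linarith [show x ^ 2 + p * x + q = (x - 1) * (x + 1 + p) + (1 + p + q) by ring]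

lemma isSchurStable_quadratic_of_abs_lt {p q : ℝ} (hq : |q| < 1) (hp : |p| < 1 + q) :
    IsSchurStable (fun z => z ^ 2 + p * z + q) := by
  intro z hz
  beta_reduce at hz
  have hconj : conj z ^ 2 + p * conj z + q = 0 := by simpa using congrArg conj hz
  -- either `z` is real, or `conj z = -p - z` and then `‖z‖² = z * conj z = q`
  rcases mul_eq_zero.mp (show (z - conj z) * (z + conj z + p) = 0 by
      linear_combination hz - hconj) with h | h
  · obtain ⟨x, rfl⟩ := conj_eq_iff_real.mp (sub_eq_zero.mp h).symm
    rw [norm_real, Real.norm_eq_abs]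
    exact abs_lt_one_of_quadratic_eq_zero hq hp (by exact_mod_cast hz)
  · have hnorm : ‖z‖ ^ 2 = q := by
      rw [Complex.sq_norm, ← ofReal_inj, ← mul_conj]
      linear_combination z * h - hz
    nlinarith [norm_nonneg z, le_abs_self q]

lemma abs_mul_lt_one_and_abs_add_lt {s t : ℝ} (hs : |s| < 1) (ht : |t| < 1) :
    |s * t| < 1 ∧ |s + t| < 1 + s * t := by
  obtain ⟨hs1, hs2⟩ := abs_lt.mp hs
  obtain ⟨ht1, ht2⟩ := abs_lt.mp ht
  refine ⟨?_, abs_lt.mpr ⟨?_, ?_⟩⟩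
  · rw [abs_mul]
    nlinarith [abs_nonneg s, abs_nonneg t]
  · nlinarith [mul_pos (by linarith : (0:ℝ) < 1 + s) (by linarith : (0:ℝ) < 1 + t)]
  · nlinarith [mul_pos (by linarith : (0:ℝ) < 1 - s) (by linarith : (0:ℝ) < 1 - t)]

lemma IsSchurStable.abs_lt_of_quadratic {p q : ℝ}
    (h : IsSchurStable (fun z => z ^ 2 + p * z + q)) : |q| < 1 ∧ |p| < 1 + q := by
  rcases le_or_gt (4 * q) (p ^ 2) with hd | hd
  · have real_root (x : ℝ) (hx : x ^ 2 + p * x + q = 0) : |x| < 1 := by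
      simpa using h x (by beta_reduce; exact_mod_cast hx)
    have he : √(p ^ 2 - 4 * q) ^ 2 = p ^ 2 - 4 * q := Real.sq_sqrt (by linarith)
    set e := √(p ^ 2 - 4 * q)
    have key := abs_mul_lt_one_and_abs_add_lt
      (real_root ((-p + e) / 2) (by linear_combination he / 4))
      (real_root ((-p - e) / 2) (by linear_combination he / 4))
    rwa [show (-p + e) / 2 * ((-p - e) / 2) = q by linear_combination -he / 4,
      show (-p + e) / 2 + (-p - e) / 2 = -p by ring, abs_neg] at key
  · have hc : √(4 * q - p ^ 2) ^ 2 = 4 * q - p ^ 2 := Real.sq_sqrt (by linarith)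
    set c := √(4 * q - p ^ 2)
    set w : ℂ := ⟨-p / 2, c / 2⟩
    have hw : ‖w‖ ^ 2 = q := by
      rw [Complex.sq_norm, normSq_mk]
      linear_combination hc / 4
    have hw1 := h w <| Complex.ext (by simp [w, sq]; linear_combination -hc / 4)
      (by simp [w, sq]; ring)
    have hq0 : 0 < q := by nlinarith [sq_nonneg p]
    have hq1 : q < 1 := by nlinarith [norm_nonneg w]
    exact ⟨abs_lt.mpr ⟨by linarith, hq1⟩,
      abs_lt_of_sq_lt_sq (by nlinarith [sq_nonneg (1 - q)]) (by linarith)⟩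

lemma isSchurStable_quadratic_iff (p q : ℝ) :
    IsSchurStable (fun z => z ^ 2 + p * z + q) ↔ |q| < 1 ∧ |p| < 1 + q :=
  ⟨IsSchurStable.abs_lt_of_quadratic, fun h => isSchurStable_quadratic_of_abs_lt h.1 h.2⟩

lemma isSchurStable_cubic_iff {A b D x p q : ℝ} (hA : A = p - x) (hb : b = q - x * p)
    (hD : D = -(x * q)) :
    IsSchurStable (fun z => z ^ 3 + A * z ^ 2 + b * z + D) ↔ |x| < 1 ∧ |q| < 1 ∧ |p| < 1 + q := by
  have hfac : (fun z : ℂ => z ^ 3 + A * z ^ 2 + b * z + D) =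
      fun z : ℂ => (z - x) * (z ^ 2 + p * z + q) := by
    funext z
    subst hA hb hD
    push_cast
    ring
  rw [hfac, isSchurStable_sub_mul_iff, isSchurStable_quadratic_iff, norm_real, Real.norm_eq_abs]

lemma abs_quadratic_lt_cube {a b c x : ℝ} (hx : 1 + |a| + |b| + |c| ≤ |x|) :
    |a * x ^ 2 + b * x + c| < |x| ^ 3 := by
  have h1 : 1 ≤ |x| := by linarith [abs_nonneg a, abs_nonneg b, abs_nonneg c]
  calc |a * x ^ 2 + b * x + c| ≤ |a| * |x| ^ 2 + |b| * |x| + |c| := by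
        rw [← abs_pow, ← abs_mul, ← abs_mul]; exact abs_add_three _ _ _
    _ ≤ (|a| + |b| + |c|) * |x| ^ 2 := by
        have hx2 : |x| ≤ |x| ^ 2 := by nlinarith
        nlinarith [mul_le_mul_of_nonneg_left hx2 (abs_nonneg b),
          mul_le_mul_of_nonneg_left (hx2.trans' h1) (abs_nonneg c)]
    _ < |x| * |x| ^ 2 := by gcongr; linarith
    _ = |x| ^ 3 := by ring

lemma exists_cubic_eq_zero (a b c : ℝ) : ∃ x : ℝ, x ^ 3 + a * x ^ 2 + b * x + c = 0 := by
  set M := 1 + |a| + |b| + |c|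
  have hM : 0 ≤ M := by positivity
  have hpos := abs_quadratic_lt_cube (a := a) (b := b) (c := c) (x := M) (abs_of_nonneg hM).ge
  have hneg := abs_quadratic_lt_cube (a := a) (b := b) (c := c) (x := -M)
    (by rw [abs_neg, abs_of_nonneg hM])
  rw [abs_of_nonneg hM, abs_lt] at hpos
  rw [abs_neg, abs_of_nonneg hM, abs_lt] at hneg
  have hmem : (0 : ℝ) ∈
      Set.Icc ((-M) ^ 3 + a * (-M) ^ 2 + b * -M + c) (M ^ 3 + a * M ^ 2 + b * M + c) :=
    ⟨by linarith [hneg.2, show (-M) ^ 3 = -M ^ 3 by ring], by linarith [hpos.1]⟩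
  obtain ⟨x, -, hx⟩ := intermediate_value_Icc (neg_le_self hM)
    (f := fun x => x ^ 3 + a * x ^ 2 + b * x + c) (by fun_prop) hmem
  exact ⟨x, hx⟩

lemma abs_lt_one_and_abs_sub_lt_two {A D x p q : ℝ} (hA : A = p - x) (hD : D = -(x * q))
    (hx : |x| < 1) (hq : |q| < 1) (hp : |p| < 1 + q) : |D| < 1 ∧ |A - D| < 2 := by
  have hq1 : 0 < 1 - q := by linarith [le_abs_self q]
  constructor
  · rw [hD, abs_neg, abs_mul]
    nlinarith [abs_nonneg x, abs_nonneg q]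
  · calc |A - D| = |p - x * (1 - q)| := by rw [hA, hD]; ring_nf
      _ ≤ |p| + |x| * (1 - q) := by
          rw [← abs_of_pos hq1, ← abs_mul, abs_of_pos hq1]; exact abs_sub _ _
      _ < (1 + q) + 1 * (1 - q) := by gcongr
      _ = 2 := by ring

lemma exists_abs_lt_abs_sub_div_lt {A D : ℝ} (hD : |D| < 1) (hAD : |A - D| < 2) :
    ∃ q : ℝ, |D| < q ∧ q < 1 ∧ |A - D / q| < 1 + q := by
  have h1 : ∀ᶠ q in 𝓝 (1 : ℝ), |D| < q := eventually_gt_nhds hD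
  have h2 : ∀ᶠ q in 𝓝 (1 : ℝ), |A - D / q| < 1 + q := by
    have hc : ContinuousAt (fun q : ℝ => |A - D / q|) 1 := by fun_prop (disch := norm_num)
    exact hc.eventually_lt (by fun_prop) (by norm_num; linarith)
  have h3 : ∀ᶠ q in 𝓝[<] (1 : ℝ), (|D| < q ∧ |A - D / q| < 1 + q) ∧ q < 1 :=
    ((h1.and h2).filter_mono nhdsWithin_le_nhds).and self_mem_nhdsWithin
  obtain ⟨q, ⟨hDq, hq⟩, hq1⟩ := h3.exists
  exact ⟨q, hDq, hq1, hq⟩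

/-- There exists `β` such that all complex roots of `P_β(λ) = λ³ + Aλ² + (B+β)λ + D`
lie strictly inside the unit circle iff `|D| < 1` and `|A - D| < 2`. -/
theorem exists_stable_parameter_iff (A B D : ℝ) :
    (∃ β : ℝ, ∀ z : ℂ,
        z ^ 3 + (A : ℂ) * z ^ 2 + ((B : ℂ) + (β : ℂ)) * z + (D : ℂ) = 0 →
        ‖z‖ < 1) ↔
      (|D| < 1 ∧ |A - D| < 2) := by
  simp_rw [← ofReal_add]
  change (∃ β : ℝ, IsSchurStable fun z => z ^ 3 + A * z ^ 2 + ((B + β : ℝ) : ℂ) * z + D) ↔ _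
  constructor
  · rintro ⟨β, hβ⟩
    obtain ⟨x, hx⟩ := exists_cubic_eq_zero A (B + β) D
    have hA : A = (A + x) - x := by ring
    have hD : D = -(x * (B + β + x * (A + x))) := by linear_combination hx
    obtain ⟨hx1, hq, hp⟩ := (isSchurStable_cubic_iff hA (by ring) hD).mp hβ
    exact abs_lt_one_and_abs_sub_lt_two hA hD hx1 hq hp
  · rintro ⟨hD, hAD⟩
    obtain ⟨q, hDq, hq1, hp⟩ := exists_abs_lt_abs_sub_div_lt hD hAD
    have hq0 : 0 < q := (abs_nonneg D).trans_lt hDq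
    refine ⟨q + D / q * (A - D / q) - B, (isSchurStable_cubic_iff (x := -D / q) (p := A - D / q)
      (q := q) (by ring) (by ring) (by field_simp)).mpr ⟨?_, abs_lt.mpr ⟨by linarith, hq1⟩, hp⟩⟩
    rwa [abs_div, abs_neg, abs_of_pos hq0, div_lt_one hq0]
end

section
/- Suppose |D| < 1 and |A - D| < 2, and let α̂ = -D^2 + AD - B + 1. If additionally α̂ > max{-P_0(1), P_0(-1)}, then the polynomial P_{α̂}(λ) = λ^3 + Aλ^2 + (B+α̂)λ + D has the real root -D together with two complex conjugate nonreal roots lying on the unit circle (and different from ±1). -/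
/-!
At `α̂` the cubic factors as `(λ + D)(λ² + (A - D)λ + 1)`. Since `|A - D| < 2` the quadratic
factor has negative discriminant, so its roots are nonreal and conjugate, and their product `1`
puts them on the unit circle.
-/

open ComplexConjugate

theorem Complex.exists_unit_root_sq_add_mul_add_one {a : ℝ} (ha : |a| < 2) :
    ∃ z : ℂ, z.im ≠ 0 ∧ ‖z‖ = 1 ∧ z ^ 2 + a * z + 1 = 0 := by
  have hdisc : 0 < 4 - a ^ 2 := by nlinarith [abs_lt.mp ha]
  obtain ⟨s, hs_pos, hs⟩ : ∃ s : ℝ, 0 < s ∧ s ^ 2 = 1 - a ^ 2 / 4 :=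
    ⟨√(4 - a ^ 2) / 2, by positivity, by rw [div_pow, Real.sq_sqrt hdisc.le]; ring⟩
  refine ⟨⟨-a / 2, s⟩, hs_pos.ne', ?_, ?_⟩
  · rw [Complex.norm_def, Complex.normSq_mk, Real.sqrt_eq_one]
    linear_combination hs
  · apply Complex.ext
    · simp only [sq, add_re, mul_re, ofReal_re, ofReal_im, zero_mul, sub_zero, one_re, zero_re]
      linear_combination -hs
    · simp only [sq, add_im, mul_im, ofReal_re, ofReal_im, zero_mul, add_zero, one_im, zero_im]
      ring

theorem cubic_eq_add_mul_quadratic {R : Type*} [CommRing R] (A B D x : R) :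
    x ^ 3 + A * x ^ 2 + (B + (-D ^ 2 + A * D - B + 1)) * x + D =
      (x + D) * (x ^ 2 + (A - D) * x + 1) := by
  ring

theorem endpoint_roots_general (A B D : ℝ) (hAD : |A - D| < 2) :
    letI α : ℝ := -D ^ 2 + A * D - B + 1
    ((-D : ℂ) ^ 3 + (A : ℂ) * (-D : ℂ) ^ 2 + ((B : ℂ) + (α : ℂ)) * (-D : ℂ) + (D : ℂ) = 0) ∧
    ∃ z : ℂ, z.im ≠ 0 ∧ ‖z‖ = 1 ∧ z ≠ 1 ∧ z ≠ -1 ∧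
      (z ^ 3 + (A : ℂ) * z ^ 2 + ((B : ℂ) + (α : ℂ)) * z + (D : ℂ) = 0) ∧
      ((starRingEnd ℂ z) ^ 3 + (A : ℂ) * (starRingEnd ℂ z) ^ 2
        + ((B : ℂ) + (α : ℂ)) * (starRingEnd ℂ z) + (D : ℂ) = 0) := by
  obtain ⟨z, hz_im, hz_norm, hz_root⟩ := Complex.exists_unit_root_sq_add_mul_add_one hAD
  have hconj_root : conj z ^ 2 + (A - D : ℝ) * conj z + 1 = 0 := by
    simpa using congrArg conj hz_root
  push_cast at hz_root hconj_root ⊢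
  refine ⟨by ring, z, hz_im, hz_norm, fun h => hz_im (by simp [h]),
    fun h => hz_im (by simp [h]), ?_, ?_⟩
  · rw [cubic_eq_add_mul_quadratic, hz_root, mul_zero]
  · rw [cubic_eq_add_mul_quadratic, hconj_root, mul_zero]

/-- At the right endpoint `α̂ = -D² + AD - B + 1` of the stability interval, the cubic
`P_α̂` has the real root `-D` together with a pair of nonreal complex conjugate roots on
the unit circle, different from `±1`. -/
theorem endpoint_roots (A B D : ℝ) (hD : |D| < 1) (hAD : |A - D| < 2)
    (hgt : max (-(1 + A + B + D)) (-1 + A - B + D) < -D ^ 2 + A * D - B + 1) :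
    letI α : ℝ := -D ^ 2 + A * D - B + 1
    ((-D : ℂ) ^ 3 + (A : ℂ) * (-D : ℂ) ^ 2 + ((B : ℂ) + (α : ℂ)) * (-D : ℂ) + (D : ℂ) = 0) ∧
    ∃ z : ℂ, z.im ≠ 0 ∧ ‖z‖ = 1 ∧ z ≠ 1 ∧ z ≠ -1 ∧
      (z ^ 3 + (A : ℂ) * z ^ 2 + ((B : ℂ) + (α : ℂ)) * z + (D : ℂ) = 0) ∧
      ((starRingEnd ℂ z) ^ 3 + (A : ℂ) * (starRingEnd ℂ z) ^ 2
        + ((B : ℂ) + (α : ℂ)) * (starRingEnd ℂ z) + (D : ℂ) = 0) :=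
  endpoint_roots_general A B D hAD
end

section
/- Every periodic point (x,y,z) of the ACT map F satisfies |x| ≤ M, where M = ((|a^2 e + b^2 e| + |a^2+b^2-bc+2ae| + |2a+e| + 1)/|bd|)^{1/(k-1)}. -/
/-- The key algebraic identity: the difference equation satisfied by the
x-coordinates of an orbit of the ACT map. -/
lemma ACT_identity (a b c d e : ℝ) (k : ℕ) (q : ℝ × ℝ × ℝ) :
    b * d * (ACT a b c d e k q).1 ^ k =
      (a ^ 2 * e + b ^ 2 * e) * q.1
      - (a ^ 2 + b ^ 2 - b * c + 2 * a * e) * (ACT a b c d e k q).1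
      + (2 * a + e) * (ACT a b c d e k (ACT a b c d e k q)).1
      - (ACT a b c d e k (ACT a b c d e k (ACT a b c d e k q))).1 := by
  obtain ⟨x, y, z⟩ := q
  simp only [ACT]
  ring

/-- Every periodic point of the ACT map has its `x`-coordinate bounded by `M`. -/
theorem ACT_periodic_point_bound (a b c d e : ℝ) (k : ℕ) (hk : 1 < k)
    (hb : b ≠ 0) (hd : d ≠ 0) (p : ℝ × ℝ × ℝ) (n : ℕ) (hn : 1 ≤ n)
    (hp : (ACT a b c d e k)^[n] p = p) :
    |p.1| ≤ ((|a ^ 2 * e + b ^ 2 * e| + |a ^ 2 + b ^ 2 - b * c + 2 * a * e|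
      + |2 * a + e| + 1) / |b * d|) ^ ((1 : ℝ) / ((k : ℝ) - 1)) := by
  set F := ACT a b c d e k with hF
  set C : ℝ := |a ^ 2 * e + b ^ 2 * e| + |a ^ 2 + b ^ 2 - b * c + 2 * a * e|
      + |2 * a + e| + 1 with hC
  have hC1 : (1 : ℝ) ≤ C := by
    have h1 := abs_nonneg (a ^ 2 * e + b ^ 2 * e)
    have h2 := abs_nonneg (a ^ 2 + b ^ 2 - b * c + 2 * a * e)
    have h3 := abs_nonneg (2 * a + e)
    rw [hC]; linarith
  have hbd : (0 : ℝ) < |b * d| := abs_pos.mpr (mul_ne_zero hb hd)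
  set s : ℕ → ℝ := fun i => (F^[i] p).1 with hs
  -- periodicity of s
  have hper : ∀ i, s (i + n) = s i := by
    intro i
    simp only [hs, Function.iterate_add_apply, hp]
  have hperm : ∀ t i, s (i + n * t) = s i := by
    intro t
    induction t with
    | zero => simp
    | succ m ih =>
      intro i
      have : i + n * (m + 1) = (i + n * m) + n := by ring
      rw [this, hper, ih]
  have hne : (Finset.range n).Nonempty := ⟨0, Finset.mem_range.mpr hn⟩
  set X : ℝ := (Finset.range n).sup' hne (fun i => |s i|) with hX
  have hXle : ∀ j, |s j| ≤ X := by
    intro j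
    have h1 : s j = s (j % n) := by
      conv_lhs => rw [(Nat.mod_add_div j n).symm]
      exact hperm _ _
    rw [h1, hX]
    exact Finset.le_sup' (fun i => |s i|) (Finset.mem_range.mpr (Nat.mod_lt j hn))
  have hX0 : 0 ≤ X := le_trans (abs_nonneg _) (hXle 0)
  obtain ⟨i0, hi0mem, hi0⟩ := Finset.exists_mem_eq_sup' hne (fun i => |s i|)
  -- X is achieved: X = |s (i0 + n)| and i0 + n ≥ 1
  have hXach : X = |s (i0 + n - 1 + 1)| := by
    have : i0 + n - 1 + 1 = i0 + n := by omega
    rw [this, hper]; exact hi0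
  -- apply the identity at q = F^[i0+n-1] p
  set m := i0 + n - 1 with hm
  have hkey := ACT_identity a b c d e k (F^[m] p)
  have hs1 : (F (F^[m] p)).1 = s (m + 1) := by
    simp [hs, Function.iterate_succ_apply']
  have hs2 : (F (F (F^[m] p))).1 = s (m + 2) := by
    simp only [hs]
    rw [show m + 2 = m + 1 + 1 by ring, Function.iterate_succ_apply',
      Function.iterate_succ_apply']
  have hs3 : (F (F (F (F^[m] p)))).1 = s (m + 3) := by
    simp only [hs]
    rw [show m + 3 = m + 1 + 1 + 1 by ring, Function.iterate_succ_apply',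
      Function.iterate_succ_apply', Function.iterate_succ_apply']
  rw [hF] at hs1 hs2 hs3
  rw [hs1, hs2, hs3] at hkey
  -- bound: |b*d| * X^k ≤ C * X
  have hbound : |b * d| * X ^ k ≤ C * X := by
    have h1 : |b * d| * X ^ k = |b * d * s (m + 1) ^ k| := by
      rw [abs_mul (b * d) _, abs_pow, ← hXach]
    rw [h1, hkey]
    have t1 : |(a ^ 2 * e + b ^ 2 * e) * s m| ≤ |a ^ 2 * e + b ^ 2 * e| * X := by
      rw [abs_mul]
      exact mul_le_mul_of_nonneg_left (hXle m) (abs_nonneg _)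
    have t2 : |(a ^ 2 + b ^ 2 - b * c + 2 * a * e) * s (m + 1)| ≤
        |a ^ 2 + b ^ 2 - b * c + 2 * a * e| * X := by
      rw [abs_mul]
      exact mul_le_mul_of_nonneg_left (hXle _) (abs_nonneg _)
    have t3 : |(2 * a + e) * s (m + 2)| ≤ |2 * a + e| * X := by
      rw [abs_mul]
      exact mul_le_mul_of_nonneg_left (hXle _) (abs_nonneg _)
    have t4 : |s (m + 3)| ≤ 1 * X := by rw [one_mul]; exact hXle _
    calc |(a ^ 2 * e + b ^ 2 * e) * s m
          - (a ^ 2 + b ^ 2 - b * c + 2 * a * e) * s (m + 1)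
          + (2 * a + e) * s (m + 2) - s (m + 3)|
        ≤ |(a ^ 2 * e + b ^ 2 * e) * s m|
          + |(a ^ 2 + b ^ 2 - b * c + 2 * a * e) * s (m + 1)|
          + |(2 * a + e) * s (m + 2)| + |s (m + 3)| := by
          apply (abs_sub _ _).trans
          gcongr
          apply (abs_add_le _ _).trans
          gcongr
          exact abs_sub _ _
      _ ≤ |a ^ 2 * e + b ^ 2 * e| * X + |a ^ 2 + b ^ 2 - b * c + 2 * a * e| * X
          + |2 * a + e| * X + 1 * X := add_le_add (add_le_add (add_le_add t1 t2) t3) t4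
      _ = C * X := by rw [hC]; ring
  -- conclude
  have hMnn : (0 : ℝ) ≤ C / |b * d| := by positivity
  have hk1 : (0 : ℝ) < (k : ℝ) - 1 := by
    have : (1 : ℝ) < (k : ℝ) := by exact_mod_cast hk
    linarith
  have hexp : ((k : ℝ) - 1) ≠ 0 := ne_of_gt hk1
  have hfinal : X ≤ (C / |b * d|) ^ ((1 : ℝ) / ((k : ℝ) - 1)) := by
    rcases eq_or_lt_of_le hX0 with h0 | hXpos
    · rw [← h0]
      exact Real.rpow_nonneg hMnn _
    · -- X^{k-1} ≤ C/|bd|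
      have hpow : X ^ (k - 1 : ℕ) ≤ C / |b * d| := by
        rw [le_div_iff₀ hbd]
        have h1 : X ^ (k - 1 : ℕ) * |b * d| * X ≤ C * X := by
          have hXk : X ^ (k - 1 : ℕ) * X = X ^ k := by
            rw [← pow_succ]
            congr 1
            omega
          calc X ^ (k - 1 : ℕ) * |b * d| * X = |b * d| * (X ^ (k - 1 : ℕ) * X) := by ring
            _ = |b * d| * X ^ k := by rw [hXk]
            _ ≤ C * X := hbound
        exact le_of_mul_le_mul_right h1 hXpos
      have hcast : ((k - 1 : ℕ) : ℝ) = (k : ℝ) - 1 := by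
        have : (1 : ℕ) ≤ k := hk.le
        push_cast [this]
        ring
      have := Real.rpow_le_rpow (by positivity) hpow
        (le_of_lt (one_div_pos.mpr hk1))
      calc X = (X ^ (k - 1 : ℕ) : ℝ) ^ ((1 : ℝ) / ((k : ℝ) - 1)) := by
            rw [← Real.rpow_natCast X (k - 1), ← Real.rpow_mul hX0, hcast,
              mul_one_div_cancel hexp, Real.rpow_one]
        _ ≤ _ := this
  calc |p.1| = |s 0| := by simp [hs]
    _ ≤ X := hXle 0
    _ ≤ _ := hfinal
end

section
/- If (x_n)_{n∈Z} are the x-coordinates of an orbit of the ACT map F (with b ≠ 0), then for all n: y_{n+1} = ((a^2+b^2)/b)x_n - (a/b)x_{n+1}, z_{n+1} = ((a^2+b^2)/b)x_n - (2a/b)x_{n+1} + (1/b)x_{n+2}, and the x-coordinates satisfy the fourth-order difference equation d·x_{n+1}^k - ((a^2+b^2)e/b)·x_n + ((a^2+b^2-bc+2ae)/b)·x_{n+1} - ((2a+e)/b)·x_{n+2} + (1/b)·x_{n+3} = 0. -/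
/-- Along any orbit of the ACT map, the `y` and `z` coordinates are determined by the
`x`-coordinates, which satisfy a fourth-order difference equation. -/
theorem ACT_orbit_difference_equation (a b c d e : ℝ) (k : ℕ) (hk : 1 < k) (hb : b ≠ 0)
    (x y z : ℤ → ℝ)
    (horb : ∀ n : ℤ, ACT a b c d e k (x n, y n, z n) = (x (n + 1), y (n + 1), z (n + 1))) :
    ∀ n : ℤ,
      y (n + 1) = ((a ^ 2 + b ^ 2) / b) * x n - (a / b) * x (n + 1) ∧
      z (n + 1) = ((a ^ 2 + b ^ 2) / b) * x n - (2 * a / b) * x (n + 1)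
        + (1 / b) * x (n + 2) ∧
      d * x (n + 1) ^ k - ((a ^ 2 + b ^ 2) * e / b) * x n
        + ((a ^ 2 + b ^ 2 - b * c + 2 * a * e) / b) * x (n + 1)
        - ((2 * a + e) / b) * x (n + 2) + (1 / b) * x (n + 3) = 0 := by
  have h1 : ∀ n : ℤ, x (n + 1) = a * x n - b * (y n - z n) := fun n =>
    (congrArg Prod.fst (horb n)).symm
  have h2 : ∀ n : ℤ, y (n + 1) = b * x n + a * (y n - z n) := fun n =>
    (congrArg (fun p => p.2.1) (horb n)).symm
  have h3 : ∀ n : ℤ, z (n + 1) = c * x n - d * x n ^ k + e * z n := fun n =>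
    (congrArg (fun p => p.2.2) (horb n)).symm
  have hy : ∀ n : ℤ, y (n + 1) = ((a ^ 2 + b ^ 2) / b) * x n - (a / b) * x (n + 1) := by
    intro n
    rw [h2 n, h1 n]
    field_simp
    ring
  have hz : ∀ n : ℤ, z (n + 1) = ((a ^ 2 + b ^ 2) / b) * x n - (2 * a / b) * x (n + 1)
      + (1 / b) * x (n + 2) := by
    intro n
    have e1 := h1 (n + 1)
    have e2 := hy n
    have : z (n + 1) = y (n + 1) - (y (n + 1) - z (n + 1)) := by ring
    rw [this]
    have e3 : y (n + 1) - z (n + 1) = (a * x (n + 1) - x (n + 1 + 1)) / b := by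
      field_simp
      linarith [h1 (n + 1)]
    rw [e3, e2]
    have : n + 1 + 1 = n + 2 := by ring
    rw [this]
    field_simp
    ring
  intro n
  refine ⟨hy n, hz n, ?_⟩
  have e1 := hz n
  have e2 := hz (n + 1)
  have e3 := h3 (n + 1)
  have r1 : n + 1 + 1 = n + 2 := by ring
  have r2 : n + 1 + 2 = n + 3 := by ring
  rw [r1, r2] at e2
  rw [r1] at e3
  rw [e2, e1] at e3
  field_simp at e3 ⊢
  linarith [e3]
end
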